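/- (Efron(q) weights.) Let n ≥ 1, q ≥ 1, let (N_1,…,N_n) be a multinomial random vector with q trials and uniform cell probabilities 1/n (equivalently N_i = card{k ≤ q : U_k = i} for U_1,…,U_q i.i.d. uniform on {1,…,n}), and set W_i := (n/q)·N_i. Then for any subset Λ ⊆ {1,…,n} with card(Λ) = m ≥ 1, any i ∈ Λ, and W̄ := m^{−1} Σ_{j∈Λ} W_j, one has E[(W_i − W̄)²/W̄ | W̄ > 0] = (n/q)(1 − 1/m). -/

import Mathlib

/-!
Write `N_j = #{k | u k = j}` and `M = ∑ j ∈ Λ, N_j`; the integrand is `(n/q) (N_i - M/m)² m / M`.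
Fix the set `S` of draws landing in `Λ`. Given `S`, the draws are independent, uniform on `Λ`
for `k ∈ S` and on `Λᶜ` otherwise, and `N_i - M/m = ∑ k, φ (u k)` with
`φ = 𝟙_{i} - 𝟙_Λ / m`, which has mean zero on both `Λ` and `Λᶜ`. So the cross terms of the
square vanish and `E[(N_i - M/m)² | S] = #S · (1/m)(1 - 1/m)`, the binomial variance;
multiplying by `m / M = m / #S` gives `1 - 1/m` whenever `S ≠ ∅`.
-/

open MeasureTheory ProbabilityTheory Finset

noncomputable def unifM (α : Type*) [Fintype α] [MeasurableSpace α] : Measure α :=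
  (Fintype.card α : ENNReal)⁻¹ • Measure.count

noncomputable def efronW (n q : ℕ) (i : Fin n) (u : Fin q → Fin n) : ℝ :=
  (n : ℝ) / q * ((Finset.univ.filter fun k => u k = i).card : ℝ)

namespace Fintype

variable {ι α R : Type*} [Fintype ι] [DecidableEq ι]

theorem sum_piFinset_apply_eq_smul [DecidableEq α] [AddCommMonoid R] (s : ι → Finset α)
    (k : ι) (g : α → R) :
    ∑ u ∈ piFinset s, g (u k) = (∏ b ∈ univ.erase k, #(s b)) • ∑ j ∈ s k, g j := by
  refine (sum_fiberwise_of_maps_to' (g := fun u : ι → α => u k)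
    (fun u hu => mem_piFinset.mp hu k) g).symm.trans ?_
  rw [smul_sum]
  exact Finset.sum_congr rfl fun j hj => by rw [sum_const, card_filter_piFinset_eq_of_mem s k hj]

theorem sum_piFinset_mul_apply_eq_zero [CommSemiring R] (s : ι → Finset α) {k l : ι}
    (hkl : k ≠ l) {f : α → R} (hf : ∑ j ∈ s k, f j = 0) (g : α → R) :
    ∑ u ∈ piFinset s, f (u k) * g (u l) = 0 := by
  set h : ι → α → R := fun r => if r = k then f else if r = l then g else 1
  have hprod (u : ι → α) : f (u k) * g (u l) = ∏ r, h r (u r) := by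
    rw [prod_eq_mul k l hkl fun r hr => by simp [h, hr.1, hr.2]]
    simp [h, hkl.symm]
  -- the sum factorises over the coordinates, and the `k`-th factor is `∑ j ∈ s k, f j = 0`
  simp_rw [hprod, ← prod_univ_sum s h]
  exact prod_eq_zero (mem_univ k) (by simpa [h] using hf)

theorem sum_piFinset_sum_apply_sq [CommSemiring R] {s : ι → Finset α} {φ : ι → α → R}
    (hφ : ∀ k, ∑ j ∈ s k, φ k j = 0) :
    ∑ u ∈ piFinset s, (∑ k, φ k (u k)) ^ 2 =
      ∑ k, ∑ u ∈ piFinset s, φ k (u k) ^ 2 := by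
  simp_rw [sq, sum_mul_sum]
  rw [sum_comm]
  refine Finset.sum_congr rfl fun k _ => ?_
  rw [sum_comm]
  exact Finset.sum_eq_single k
    (fun l _ hlk => sum_piFinset_mul_apply_eq_zero s hlk.symm (hφ k) _) (by simp)

end Fintype

section centeredIndicator

variable {ι α : Type*} [DecidableEq α] {Λ : Finset α} {i : α}

noncomputable def centeredIndicator (Λ : Finset α) (i j : α) : ℝ :=
  (if j = i then 1 else 0) - (if j ∈ Λ then 1 else 0) / #Λ

theorem centeredIndicator_of_mem {j : α} (hj : j ∈ Λ) :
    centeredIndicator Λ i j = (if j = i then 1 else 0) - 1 / #Λ := by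
  simp [centeredIndicator, hj]

theorem centeredIndicator_of_notMem (hi : i ∈ Λ) {j : α} (hj : j ∉ Λ) :
    centeredIndicator Λ i j = 0 := by
  have : j ≠ i := by rintro rfl; exact hj hi
  simp [centeredIndicator, this, hj]

theorem sum_centeredIndicator (hi : i ∈ Λ) : ∑ j ∈ Λ, centeredIndicator Λ i j = 0 := by
  have : (#Λ : ℝ) ≠ 0 := by exact_mod_cast (card_pos.mpr ⟨i, hi⟩).ne'
  rw [sum_congr rfl fun j hj => centeredIndicator_of_mem hj]
  simp [sum_sub_distrib, hi, this]

theorem sum_centeredIndicator_sq (hi : i ∈ Λ) :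
    ∑ j ∈ Λ, centeredIndicator Λ i j ^ 2 = 1 - 1 / #Λ := by
  have : (#Λ : ℝ) ≠ 0 := by exact_mod_cast (card_pos.mpr ⟨i, hi⟩).ne'
  have hsq (j : α) : ((if j = i then 1 else 0) - 1 / #Λ) ^ 2 =
      (1 - 2 / #Λ) * (if j = i then 1 else 0) + 1 / (#Λ : ℝ) ^ 2 := by
    split_ifs <;> ring
  rw [sum_congr rfl fun j hj => by rw [centeredIndicator_of_mem hj, hsq]]
  rw [sum_add_distrib, ← mul_sum, sum_ite_eq', if_pos hi, sum_const, nsmul_eq_mul]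
  field_simp
  ring

theorem sum_centeredIndicator_apply [Fintype ι] (u : ι → α) :
    ∑ k, centeredIndicator Λ i (u k) = #{k | u k = i} - (#{k | u k ∈ Λ} : ℝ) / #Λ := by
  simp [centeredIndicator, sum_sub_distrib, ← sum_div]

end centeredIndicator

section fibers

variable {ι α : Type*} [Fintype ι] [DecidableEq ι] [Fintype α] [DecidableEq α]
  {Λ : Finset α} {i : α}

theorem filter_mem_eq_iff_mem_piFinset (u : ι → α) (S : Finset ι) :
    ({k | u k ∈ Λ} : Finset ι) = S ↔
      u ∈ Fintype.piFinset fun k => if k ∈ S then Λ else Λᶜ := by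
  simp only [Finset.ext_iff, mem_filter, mem_univ, true_and, Fintype.mem_piFinset]
  refine forall_congr' fun k => ?_
  by_cases hk : k ∈ S <;> simp [hk]

theorem card_mul_sum_sq_sub_eq (hi : i ∈ Λ) (S : Finset ι) :
    (#Λ : ℝ) * ∑ u : ι → α with ({k | u k ∈ Λ} : Finset ι) = S,
        ((#{k | u k = i} : ℝ) - #{k | u k ∈ Λ} / #Λ) ^ 2 =
      #S * #{u : ι → α | ({k | u k ∈ Λ} : Finset ι) = S} * (1 - 1 / #Λ) := by
  set s : ι → Finset α := fun k => if k ∈ S then Λ else Λᶜ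
  have hfiber :
      ({u | ({k | u k ∈ Λ} : Finset ι) = S} : Finset (ι → α)) = Fintype.piFinset s := by
    ext u; simp [filter_mem_eq_iff_mem_piFinset, s]
  have hcentered (k : ι) : ∑ j ∈ s k, centeredIndicator Λ i j = 0 := by
    by_cases hk : k ∈ S
    · simp [s, hk, sum_centeredIndicator hi]
    · simp only [s, hk, if_false]
      exact sum_eq_zero fun j hj => centeredIndicator_of_notMem hi (mem_compl.mp hj)
  have hsq (k : ι) :
      ∑ j ∈ s k, centeredIndicator Λ i j ^ 2 = if k ∈ S then 1 - 1 / (#Λ : ℝ) else 0 := by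
    by_cases hk : k ∈ S
    · simp [s, hk, sum_centeredIndicator_sq hi]
    · simp only [s, hk, if_false]
      exact sum_eq_zero fun j hj => by simp [centeredIndicator_of_notMem hi (mem_compl.mp hj)]
  have hcard (k : ι) (hk : k ∈ S) :
      #Λ * ∏ b ∈ univ.erase k, #(s b) = #(Fintype.piFinset s) := by
    rw [Fintype.card_piFinset, ← mul_prod_erase _ _ (mem_univ k), show s k = Λ from if_pos hk]
  have hterm (k : ι) :
      (#Λ : ℝ) * (∏ b ∈ univ.erase k, #(s b)) •
          ∑ j ∈ s k, centeredIndicator Λ i j ^ 2 =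
        if k ∈ S then #(Fintype.piFinset s) * (1 - 1 / (#Λ : ℝ)) else 0 := by
    rw [hsq]
    split_ifs with hk
    · rw [nsmul_eq_mul, ← mul_assoc, ← hcard k hk]
      push_cast
      ring
    · rw [smul_zero, mul_zero]
  rw [hfiber]
  simp_rw [← sum_centeredIndicator_apply]
  rw [Fintype.sum_piFinset_sum_apply_sq hcentered, Finset.sum_congr rfl fun k _ =>
    Fintype.sum_piFinset_apply_eq_smul s k (centeredIndicator Λ i · ^ 2), mul_sum]
  simp_rw [hterm]
  rw [sum_ite_mem, univ_inter, sum_const, nsmul_eq_mul, mul_assoc]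

theorem sum_sq_sub_mul_div_eq (hi : i ∈ Λ) :
    ∑ u : ι → α with 0 < #{k | u k ∈ Λ},
        ((#{k | u k = i} : ℝ) - #{k | u k ∈ Λ} / #Λ) ^ 2 * #Λ / #{k | u k ∈ Λ} =
      #{u : ι → α | 0 < #{k | u k ∈ Λ}} * (1 - 1 / (#Λ : ℝ)) := by
  set T : (ι → α) → Finset ι := fun u => {k | u k ∈ Λ}
  set A : Finset (ι → α) := {u | 0 < #(T u)}
  rw [← sum_fiberwise A T, card_eq_sum_card_fiberwise (f := T) (t := univ) (by simp),
    Nat.cast_sum, sum_mul]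
  refine Finset.sum_congr rfl fun S _ => ?_
  obtain rfl | hS := S.eq_empty_or_nonempty
  · have : ({u ∈ A | T u = ∅} : Finset (ι → α)) = ∅ :=
      filter_eq_empty_iff.mpr fun u hu hTu => by simp [A, hTu] at hu
    simp [this]
  have hfiber : ({u ∈ A | T u = S} : Finset (ι → α)) = ({u | T u = S} : Finset _) := by
    ext u
    simp only [A, mem_filter, mem_univ, true_and, and_iff_right_iff_imp]
    rintro rfl
    exact hS.card_pos
  have hS0 : (#S : ℝ) ≠ 0 := by exact_mod_cast hS.card_pos.ne'
  rw [hfiber]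
  calc _ = (#Λ * ∑ u : ι → α with T u = S,
          ((#{k | u k = i} : ℝ) - #{k | u k ∈ Λ} / #Λ) ^ 2) / #S := by
        rw [mul_sum, sum_div]
        refine Finset.sum_congr rfl fun u hu => ?_
        rw [← (mem_filter.mp hu).2]
        ring
    _ = _ := by
        rw [card_mul_sum_sq_sub_eq hi S, mul_assoc, mul_div_cancel_left₀ _ hS0]

end fibers

theorem integral_cond_unifM {α : Type*} [Fintype α] [MeasurableSpace α]
    [MeasurableSingletonClass α] (A : Finset α) (f : α → ℝ) :
    ∫ x, f x ∂(unifM α)[|A] = (∑ x ∈ A, f x) / #A := by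
  have hA : ∫ x in A, f x ∂Measure.count = ∑ x ∈ A, f x := by
    simp [setIntegral_finset A IntegrableOn.finset]
  simp only [ProbabilityTheory.cond, unifM, Measure.smul_apply, Measure.restrict_smul,
    integral_smul_measure, Measure.count_apply_finset, hA, smul_eq_mul, ENNReal.toReal_mul,
    ENNReal.toReal_inv, ENNReal.toReal_natCast]
  obtain rfl | ⟨x, -⟩ := A.eq_empty_or_nonempty
  · simp
  have : Nonempty α := ⟨x⟩
  have : (Fintype.card α : ℝ) ≠ 0 := by positivity
  field_simp

theorem efron_R2_general (n q : ℕ) (hq : 1 ≤ q)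
    (Λ : Finset (Fin n)) (m : ℕ) (hm : Λ.card = m) (i : Fin n) (hi : i ∈ Λ) :
    ∫ u, (efronW n q i u - (∑ j ∈ Λ, efronW n q j u) / m) ^ 2 /
        ((∑ j ∈ Λ, efronW n q j u) / m)
      ∂((unifM (Fin q → Fin n))[|{u | 0 < (∑ j ∈ Λ, efronW n q j u) / m}]) =
      (n : ℝ) / q * (1 - 1 / m) := by
  subst hm
  have hc : (0 : ℝ) < n / q := by have := i.pos; positivity
  have hΛ : (0 : ℝ) < #Λ := by exact_mod_cast card_pos.mpr ⟨i, hi⟩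
  have hsum (u : Fin q → Fin n) : ∑ j ∈ Λ, efronW n q j u = n / q * #{k | u k ∈ Λ} := by
    simp only [efronW, ← mul_sum, ← Nat.cast_sum, sum_card_fiberwise_eq_card_filter]
  have hset : {u | 0 < (∑ j ∈ Λ, efronW n q j u) / #Λ} =
      ↑({u | 0 < #{k | u k ∈ Λ}} : Finset (Fin q → Fin n)) := by
    ext u
    simp [hsum, hc, hΛ, div_pos_iff_of_pos_right, mul_pos_iff_of_pos_left]
  have hintegrand (u : Fin q → Fin n) :
      (efronW n q i u - (∑ j ∈ Λ, efronW n q j u) / #Λ) ^ 2 /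
          ((∑ j ∈ Λ, efronW n q j u) / #Λ) =
        n / q *
          (((#{k | u k = i} : ℝ) - #{k | u k ∈ Λ} / #Λ) ^ 2 * #Λ / #{k | u k ∈ Λ}) := by
    rw [hsum, efronW]
    -- if no draw lands in `Λ`, both sides are `0` by division by zero
    by_cases hM : (#{k | u k ∈ Λ} : ℝ) = 0
    · simp [hM]
    · field_simp
  have : Nonempty (Fin q) := ⟨⟨0, hq⟩⟩
  have hpos : 0 < #({u | 0 < #{k | u k ∈ Λ}} : Finset (Fin q → Fin n)) :=
    card_pos.mpr ⟨fun _ => i, by simp [hi]⟩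
  rw [hset, integral_cond_unifM]
  simp_rw [hintegrand]
  rw [← mul_sum, sum_sq_sub_mul_div_eq hi]
  field_simp

/-- **`R_{2,W}` for Efron(q) weights**: for any cell `Λ` of cardinality `m ≥ 1` and `i ∈ Λ`,
with `W̄ = m⁻¹ Σ_{j∈Λ} W_j`, one has
`E[(W_i − W̄)²/W̄ | W̄ > 0] = (n/q)(1 − 1/m)`. -/
theorem efron_R2 (n q : ℕ) (hn : 1 ≤ n) (hq : 1 ≤ q)
    (Λ : Finset (Fin n)) (m : ℕ) (hm : Λ.card = m) (hm1 : 1 ≤ m) (i : Fin n) (hi : i ∈ Λ) :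
    ∫ u, (efronW n q i u - (∑ j ∈ Λ, efronW n q j u) / m) ^ 2 /
        ((∑ j ∈ Λ, efronW n q j u) / m)
      ∂((unifM (Fin q → Fin n))[|{u | 0 < (∑ j ∈ Λ, efronW n q j u) / m}]) =
      (n : ℝ) / q * (1 - 1 / m) :=
  efron_R2_general n q hq Λ m hm i hi
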